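/- arXiv:0805.1130 — 4 statements merged into one kernel-verified Lean document; each statement's English description precedes it below -/
import Mathlib

section
/- There exists a constant C > 0 such that the following holds. Let Γ be a player-specific congestion game on a circle with n players in which all players are of type 2, or all players are of type 2' (so Γ has no termination points and overload and underload tokens move in opposite directions). Then the transition graph TG(Γ) is acyclic and every best response schedule terminates after at most C·n steps. -/
open scoped ENNReal NNReal

/-- A player-specific singleton congestion game on a circle with `n` players:
the resources are `0, …, n-1`, and player `i` chooses between resource `i`
(its 0-strategy, with delay function `d0 i`) and resource `i+1 (mod n)`
(its 1-strategy, with delay function `d1 i`). The delay functions are strictly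
increasing and ties are broken (for each player the delays of its two resources
at congestions `1 ≤ k ≤ n` are pairwise distinct). -/
structure CircleGame (n : ℕ) where
  d0 : Fin n → ℕ → ℕ
  d1 : Fin n → ℕ → ℕ
  mono0 : ∀ i, StrictMono (d0 i)
  mono1 : ∀ i, StrictMono (d1 i)
  tie : ∀ i : Fin n, ∀ k, 1 ≤ k → k ≤ n → ∀ k', 1 ≤ k' → k' ≤ n → d0 i k ≠ d1 i k'

namespace CircleGame

variable {n : ℕ} [NeZero n]

/-- A state is a function `s : Fin n → Bool`: `s i = false` iff player `i` plays its
0-strategy (resource `i`), and `s i = true` iff it plays its 1-strategy (resource `i+1`).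
`cong s r` is the congestion of resource `r`: resource `r` is allocated by player `r`
(if it plays its 0-strategy) and by player `r-1` (if it plays its 1-strategy). -/
def cong (s : Fin n → Bool) (r : Fin n) : ℕ :=
  (if s r = false then 1 else 0) + (if s (r - 1) = true then 1 else 0)

/-- The current resource of player `i` is a best response to state `s`. -/
def CurrentBR (G : CircleGame n) (s : Fin n → Bool) (i : Fin n) : Prop :=
  if s i = false then G.d0 i (cong s i) ≤ G.d1 i (cong s (i + 1) + 1)
  else G.d1 i (cong s (i + 1)) ≤ G.d0 i (cong s i + 1)

/-- One best-response step: a player whose current resource is not a best response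
switches to its (unique) other resource, which is then its best response. -/
def Step (G : CircleGame n) (s s' : Fin n → Bool) : Prop :=
  ∃ i, ¬ G.CurrentBR s i ∧ s' = Function.update s i (!(s i))

/-- Nash equilibrium: every player's current resource is a best response. -/
def IsNash (G : CircleGame n) (s : Fin n → Bool) : Prop := ∀ i, G.CurrentBR s i

/-- type 1 : `d_{r_i}(1) < d_{r_i}(2) < d_{r_{i+1}}(1) < d_{r_{i+1}}(2)`. -/
def IsType1 (G : CircleGame n) (i : Fin n) : Prop :=
  G.d0 i 1 < G.d0 i 2 ∧ G.d0 i 2 < G.d1 i 1 ∧ G.d1 i 1 < G.d1 i 2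

/-- type 1' : roles of the two resources exchanged. -/
def IsType1' (G : CircleGame n) (i : Fin n) : Prop :=
  G.d1 i 1 < G.d1 i 2 ∧ G.d1 i 2 < G.d0 i 1 ∧ G.d0 i 1 < G.d0 i 2

/-- type 2 : `d_{r_i}(1) < d_{r_{i+1}}(1) < d_{r_i}(2) < d_{r_{i+1}}(2)`. -/
def IsType2 (G : CircleGame n) (i : Fin n) : Prop :=
  G.d0 i 1 < G.d1 i 1 ∧ G.d1 i 1 < G.d0 i 2 ∧ G.d0 i 2 < G.d1 i 2

/-- type 2' : roles of the two resources exchanged. -/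
def IsType2' (G : CircleGame n) (i : Fin n) : Prop :=
  G.d1 i 1 < G.d0 i 1 ∧ G.d0 i 1 < G.d1 i 2 ∧ G.d1 i 2 < G.d0 i 2

/-- type 3 : `d_{r_i}(1) < d_{r_{i+1}}(1) < d_{r_{i+1}}(2) < d_{r_i}(2)`. -/
def IsType3 (G : CircleGame n) (i : Fin n) : Prop :=
  G.d0 i 1 < G.d1 i 1 ∧ G.d1 i 1 < G.d1 i 2 ∧ G.d1 i 2 < G.d0 i 2

/-- type 3' : roles of the two resources exchanged. -/
def IsType3' (G : CircleGame n) (i : Fin n) : Prop :=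
  G.d1 i 1 < G.d0 i 1 ∧ G.d0 i 1 < G.d0 i 2 ∧ G.d0 i 2 < G.d1 i 2

/-- Resource `r_i` is a termination point for overload tokens: the pair of types of
players `i-1` and `i` is one of `(2',2), (3,3'), (3,2), (2',3')`. -/
def OverloadTP (G : CircleGame n) (i : Fin n) : Prop :=
  (G.IsType2' (i - 1) ∧ G.IsType2 i) ∨ (G.IsType3 (i - 1) ∧ G.IsType3' i) ∨
  (G.IsType3 (i - 1) ∧ G.IsType2 i) ∨ (G.IsType2' (i - 1) ∧ G.IsType3' i)

/-- Resource `r_i` is a termination point for underload tokens: the pair of types of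
players `i-1` and `i` is one of `(2,2'), (3,3'), (2,3'), (3,2')`. -/
def UnderloadTP (G : CircleGame n) (i : Fin n) : Prop :=
  (G.IsType2 (i - 1) ∧ G.IsType2' i) ∨ (G.IsType3 (i - 1) ∧ G.IsType3' i) ∨
  (G.IsType2 (i - 1) ∧ G.IsType3' i) ∨ (G.IsType3 (i - 1) ∧ G.IsType2' i)

open scoped Classical in
/-- The set of players whose current resource is not a best response. -/
noncomputable def unsat (G : CircleGame n) (s : Fin n → Bool) : Finset (Fin n) :=
  Finset.univ.filter fun i => ¬ G.CurrentBR s i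

/-- One step of the random best response dynamics: in a state that is not a Nash
equilibrium, a player whose current resource is not a best response is selected
uniformly at random and switches to its best response; Nash equilibria are absorbing. -/
noncomputable def stepPMF (G : CircleGame n) (s : Fin n → Bool) : PMF (Fin n → Bool) :=
  if h : (G.unsat s).Nonempty then
    (PMF.uniformOfFinset (G.unsat s) h).bind fun i => PMF.pure (Function.update s i (!(s i)))
  else PMF.pure s

/-- The distribution of the random best response dynamics after `t` steps, started in `s`. -/
noncomputable def walk (G : CircleGame n) (s : Fin n → Bool) : ℕ → PMF (Fin n → Bool)
  | 0 => PMF.pure s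
  | t + 1 => (walk G s t).bind G.stepPMF

open scoped Classical in
/-- The expected number of steps until the random best response dynamics started in `s`
reaches a Nash equilibrium: since Nash equilibria are absorbing, this is
`∑_{t ≥ 0} Pr[X_t is not a Nash equilibrium]`. -/
noncomputable def expTime (G : CircleGame n) (s : Fin n → Bool) : ℝ≥0∞ :=
  ∑' t : ℕ, ∑ s' ∈ Finset.univ.filter (fun s' => ¬ G.IsNash s'), G.walk s t s'

end CircleGame


namespace CircleGameAux

def phi3 : Bool → Bool → ℕ
  | true, false => 3
  | true, true => 1
  | false, _ => 0

def Phi3 {n : ℕ} [NeZero n] (s : Fin n → Bool) : ℕ := ∑ i, phi3 (s i) (s (i + 1))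

lemma boolcase : ∀ a b c : Bool, b ≠ (a && c) →
    phi3 a (!b) + phi3 (!b) c < phi3 a b + phi3 b c := by decide

lemma boolconj : ∀ a b c : Bool, b ≠ (a || c) → (!b) ≠ ((!a) && (!c)) := by decide

lemma Phi3_le {n : ℕ} [NeZero n] (s : Fin n → Bool) : Phi3 s ≤ 3 * n := by
  have h : ∀ i ∈ Finset.univ, phi3 (s i) (s (i + 1)) ≤ 3 := by
    intro i _
    cases s i <;> cases s (i + 1) <;> simp [phi3]
  calc Phi3 s ≤ ∑ _i : Fin n, 3 := Finset.sum_le_sum h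
    _ = 3 * n := by simp [Finset.sum_const, mul_comm]

lemma key {n : ℕ} [NeZero n] (s : Fin n → Bool) (i : Fin n)
    (h : s i ≠ (s (i - 1) && s (i + 1))) :
    Phi3 (Function.update s i (!(s i))) < Phi3 s := by
  have hne : i - 1 ≠ i := by
    intro e
    have e2 : i + 1 = i := by
      have := congrArg (· + 1) e
      simpa [sub_add_cancel] using this.symm
    rw [e, e2] at h
    cases s i <;> simp at h
  have hne2 : i + 1 ≠ i := by
    intro e
    apply hne
    have := congrArg (· - 1) e
    simpa [add_sub_cancel_right] using this.symm
  set s' := Function.update s i (!(s i)) with hs'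
  have hupd_i : s' i = !(s i) := Function.update_self _ _ _
  have hupd : ∀ j, j ≠ i → s' j = s j := fun j hj => Function.update_of_ne hj _ _
  have hsplit : ∀ u : Fin n → Bool,
      Phi3 u = (phi3 (u (i - 1)) (u i) + phi3 (u i) (u (i + 1))) +
        ∑ j ∈ ({i - 1, i} : Finset (Fin n))ᶜ, phi3 (u j) (u (j + 1)) := by
    intro u
    rw [Phi3, ← Finset.sum_add_sum_compl ({i - 1, i} : Finset (Fin n))]
    congr 1
    rw [Finset.sum_pair hne, sub_add_cancel]
  rw [hsplit s, hsplit s']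
  have hcompl : ∑ j ∈ ({i - 1, i} : Finset (Fin n))ᶜ, phi3 (s' j) (s' (j + 1)) =
      ∑ j ∈ ({i - 1, i} : Finset (Fin n))ᶜ, phi3 (s j) (s (j + 1)) := by
    apply Finset.sum_congr rfl
    intro j hj
    simp only [Finset.mem_compl, Finset.mem_insert, Finset.mem_singleton, not_or] at hj
    have hj1 : j ≠ i := hj.2
    have hj2 : j + 1 ≠ i := by
      intro e
      apply hj.1
      have := congrArg (· - 1) e
      simpa [add_sub_cancel_right] using this
    rw [hupd j hj1, hupd (j + 1) hj2]
  rw [hcompl]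
  apply Nat.add_lt_add_right
  rw [hupd (i - 1) hne, hupd (i + 1) hne2, hupd_i]
  exact boolcase _ _ _ h

lemma abstract {α : Type*} (R : α → α → Prop) (μ : α → ℕ) (B : ℕ)
    (hdec : ∀ s s', R s s' → μ s' < μ s) (hb : ∀ s, μ s ≤ B) :
    (∀ s, ¬ Relation.TransGen R s s) ∧
    (∀ (L : ℕ) (f : ℕ → α), (∀ k, k < L → R (f k) (f (k + 1))) → L ≤ B) := by
  have tg : ∀ s s', Relation.TransGen R s s' → μ s' < μ s := by
    intro s s' h
    induction h with
    | single h => exact hdec _ _ h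
    | tail _ h ih => exact lt_trans (hdec _ _ h) ih
  refine ⟨fun s h => lt_irrefl _ (tg s s h), ?_⟩
  intro L f hf
  have key : ∀ k, k ≤ L → k + μ (f k) ≤ μ (f 0) := by
    intro k hk
    induction k with
    | zero => simp
    | succ m ih =>
      have h1 := hdec _ _ (hf m (by omega))
      have h2 := ih (by omega)
      omega
  have h1 := key L le_rfl
  have h2 := hb (f 0)
  omega

lemma char2 {n : ℕ} [NeZero n] (G : CircleGame n) (h2 : ∀ i, G.IsType2 i)
    (s : Fin n → Bool) (i : Fin n) :
    ¬ G.CurrentBR s i ↔ s i ≠ (s (i - 1) && s (i + 1)) := by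
  obtain ⟨ha1, ha2, ha3⟩ := h2 i
  have e1 : i + 1 - 1 = i := add_sub_cancel_right i 1
  rcases Bool.eq_false_or_eq_true (s (i - 1)) with ha | ha <;>
  rcases Bool.eq_false_or_eq_true (s i) with hb | hb <;>
  rcases Bool.eq_false_or_eq_true (s (i + 1)) with hc | hc <;>
    simp [CircleGame.CurrentBR, CircleGame.cong, e1, ha, hb, hc] <;> omega

lemma char2' {n : ℕ} [NeZero n] (G : CircleGame n) (h2 : ∀ i, G.IsType2' i)
    (s : Fin n → Bool) (i : Fin n) :
    ¬ G.CurrentBR s i ↔ s i ≠ (s (i - 1) || s (i + 1)) := by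
  obtain ⟨ha1, ha2, ha3⟩ := h2 i
  have e1 : i + 1 - 1 = i := add_sub_cancel_right i 1
  rcases Bool.eq_false_or_eq_true (s (i - 1)) with ha | ha <;>
  rcases Bool.eq_false_or_eq_true (s i) with hb | hb <;>
  rcases Bool.eq_false_or_eq_true (s (i + 1)) with hc | hc <;>
    simp [CircleGame.CurrentBR, CircleGame.cong, e1, ha, hb, hc] <;> omega

end CircleGameAux

/-- There is a constant `C > 0` such that for every circle game with `n`
players in which all players are of type 2, or all players are of type 2', the
transition graph is acyclic and every best response schedule terminates after at most
`C·n` steps. -/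
theorem circle_all_type2_linear_convergence :
    ∃ C : ℕ, 0 < C ∧
      ∀ (n : ℕ) [NeZero n] (G : CircleGame n),
        ((∀ i, G.IsType2 i) ∨ (∀ i, G.IsType2' i)) →
        (∀ s : Fin n → Bool, ¬ Relation.TransGen G.Step s s) ∧
        (∀ (L : ℕ) (f : ℕ → Fin n → Bool),
          (∀ k, k < L → G.Step (f k) (f (k + 1))) → L ≤ C * n) := by
  refine ⟨3, by norm_num, ?_⟩
  intro n _ G hG
  rcases hG with h2 | h2
  · refine CircleGameAux.abstract G.Step CircleGameAux.Phi3 (3 * n) ?_ CircleGameAux.Phi3_le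
    rintro s s' ⟨i, hbr, rfl⟩
    exact CircleGameAux.key s i ((CircleGameAux.char2 G h2 s i).mp hbr)
  · refine CircleGameAux.abstract G.Step (fun s => CircleGameAux.Phi3 (fun j => !(s j))) (3 * n) ?_
      (fun s => CircleGameAux.Phi3_le _)
    rintro s s' ⟨i, hbr, rfl⟩
    have hcond := (CircleGameAux.char2' G h2 s i).mp hbr
    have heq : (fun j => !(Function.update s i (!(s i)) j)) =
        Function.update (fun j => !(s j)) i (!((fun j => !(s j)) i)) := by
      funext j
      by_cases hj : j = i
      · subst hj; simp
      · simp [Function.update_of_ne hj]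
    simp only [heq]
    exact CircleGameAux.key (fun j => !(s j)) i
      (CircleGameAux.boolconj _ _ _ hcond)
end

section
/- There exists a constant C > 0 such that for every player-specific congestion game on a circle with n players in which all players are of type 3 (or all are of type 3'), and for every initial state, the expected number of steps until the random best response dynamics reaches a Nash equilibrium is at most C·n^2. -/
open scoped ENNReal NNReal

/-!
For players of type 3 (resp. 3'), player `i` is unsatisfied exactly when its strategy differs
from that of player `i - 1` (resp. `i + 1`). So a state is a circular word of monochromatic runs,
and a best response step moves a uniformly random wall between two runs one step in a fixed
direction `d = ±1`, two walls annihilating when they meet.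

The potential `∑ⱼ (length of the run ahead of j)`, i.e. `∑ L (L + 1) / 2` over the runs, is at
most `n²` and grows by at least one in expectation per step: moving the wall `i` loses at most the
length of the run starting at `i`, keeps at least `1` there, and gains `1` for every `j` whose run
ends just before `i`. Summed over the walls, the losses total at most `n` and the gains exactly
`n`. A drift argument then bounds the expected hitting time of a Nash equilibrium by `n²`.
-/

open scoped ENNReal
open Finset Function

theorem add_succ_nsmul_sub {G : Type*} [AddCommGroup G] (a b : G) (v : ℕ) :
    a + (v + 1) • b - b = a + v • b := by
  rw [succ_nsmul]
  abel

open scoped Fin.CommRing in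
theorem Fin.addOrderOf_one (n : ℕ) [NeZero n] : addOrderOf (1 : Fin n) = n :=
  CharP.eq _ (CharP.addOrderOf_one _) (Fin.charP n)

namespace PMF

variable {α β : Type*}

theorem tsum_pure_mul (a : α) (f : α → ℝ≥0∞) : ∑' b, PMF.pure a b * f b = f a := by
  rw [tsum_eq_single a fun b hb => by simp [hb]]
  simp

theorem tsum_bind_mul (p : PMF α) (q : α → PMF β) (f : β → ℝ≥0∞) :
    ∑' b, p.bind q b * f b = ∑' a, p a * ∑' b, q a b * f b := by
  simp_rw [bind_apply, ← ENNReal.tsum_mul_right, ← ENNReal.tsum_mul_left, mul_assoc]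
  exact ENNReal.tsum_comm

theorem tsum_uniformOfFinset_mul (s : Finset α) (hs : s.Nonempty) (f : α → ℝ≥0∞) :
    ∑' a, uniformOfFinset s hs a * f a = (∑ a ∈ s, f a) / #s := by
  rw [tsum_eq_sum (s := s) fun a ha => by simp [ha], ENNReal.div_eq_inv_mul, mul_sum]
  exact sum_congr rfl fun a ha => by simp [ha]

variable (μ : ℕ → PMF α) (κ : α → PMF α) (Φ c : α → ℝ≥0∞)

theorem sum_range_tsum_mul_le_of_drift (hμ : ∀ t, μ (t + 1) = (μ t).bind κ)
    (hdrift : ∀ a, Φ a + c a ≤ ∑' b, κ a b * Φ b) (T : ℕ) :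
    ∑ t ∈ range T, ∑' a, μ t a * c a ≤ ∑' a, μ T a * Φ a := by
  induction T with
  | zero => simp
  | succ T ih =>
    calc ∑ t ∈ range (T + 1), ∑' a, μ t a * c a
        ≤ ∑' a, μ T a * Φ a + ∑' a, μ T a * c a := by rw [sum_range_succ]; gcongr
      _ = ∑' a, μ T a * (Φ a + c a) := by simp_rw [mul_add, ENNReal.tsum_add]
      _ ≤ ∑' a, μ T a * ∑' b, κ a b * Φ b := by gcongr; exact hdrift _
      _ = ∑' a, μ (T + 1) a * Φ a := by rw [hμ, tsum_bind_mul]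

theorem tsum_tsum_mul_le_of_drift (hμ : ∀ t, μ (t + 1) = (μ t).bind κ)
    (hdrift : ∀ a, Φ a + c a ≤ ∑' b, κ a b * Φ b) (M : ℝ≥0∞) (hΦ : ∀ a, Φ a ≤ M) :
    ∑' t, ∑' a, μ t a * c a ≤ M := by
  rw [ENNReal.tsum_eq_iSup_nat]
  refine iSup_le fun T => (sum_range_tsum_mul_le_of_drift μ κ Φ c hμ hdrift T).trans ?_
  calc ∑' a, μ T a * Φ a ≤ ∑' a, μ T a * M := by gcongr; exact hΦ _
    _ = M := by rw [ENNReal.tsum_mul_right, tsum_coe, one_mul]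

end PMF

namespace CircleGame

variable {n : ℕ}

def walls (d : Fin n) (s : Fin n → Bool) : Finset (Fin n) :=
  univ.filter fun i => s i ≠ s (i - d)

theorem mem_walls {d : Fin n} {s : Fin n → Bool} {i : Fin n} :
    i ∈ walls d s ↔ s i ≠ s (i - d) := by
  simp [walls]

variable [NeZero n]

/-- The length of the monochromatic run of `s` starting at `j` in direction `d`, capped at `n`. -/
def runLength (d : Fin n) (s : Fin n → Bool) (j : Fin n) : ℕ :=
  Nat.findGreatest (fun t => ∀ u < t, s (j + u • d) = s j) n

def runPotential (d : Fin n) (s : Fin n → Bool) : ℕ :=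
  ∑ j, runLength d s j

variable {d : Fin n} {s : Fin n → Bool} {i j : Fin n} {u : ℕ}

theorem runLength_le : runLength d s j ≤ n :=
  Nat.findGreatest_le n

theorem le_runLength {t : ℕ} (ht : t ≤ n) (h : ∀ u < t, s (j + u • d) = s j) :
    t ≤ runLength d s j :=
  Nat.le_findGreatest ht h

theorem one_le_runLength : 1 ≤ runLength d s j :=
  le_runLength NeZero.one_le fun u hu => by simp [Nat.lt_one_iff.mp hu]

theorem apply_add_nsmul_of_lt_runLength (hu : u < runLength d s j) : s (j + u • d) = s j :=
  Nat.findGreatest_spec (P := fun t => ∀ u < t, s (j + u • d) = s j) (Nat.zero_le n)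
    (fun _ h => absurd h (Nat.not_lt_zero _)) u hu

theorem apply_add_runLength_nsmul_ne (h : runLength d s j < n) :
    s (j + runLength d s j • d) ≠ s j := fun heq =>
  Nat.findGreatest_is_greatest (Nat.lt_succ_self _) h fun _ hu =>
    (Nat.lt_succ_iff_lt_or_eq.mp hu).elim apply_add_nsmul_of_lt_runLength (by rintro rfl; exact heq)

theorem runPotential_le : runPotential d s ≤ n ^ 2 := by
  calc runPotential d s ≤ ∑ _j : Fin n, n := sum_le_sum fun _ _ => runLength_le
    _ = n ^ 2 := by simp [sq]

theorem eq_zero_of_add_nsmul_mem_walls (hu : u < runLength d s j)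
    (hw : j + u • d ∈ walls d s) : u = 0 := by
  obtain _ | v := u
  · rfl
  · refine absurd ?_ (mem_walls.mp hw)
    rw [add_succ_nsmul_sub, apply_add_nsmul_of_lt_runLength (s := s) hu,
      apply_add_nsmul_of_lt_runLength (s := s) (u := v) (by omega)]

theorem add_runLength_nsmul_mem_walls (h : runLength d s j < n) :
    j + runLength d s j • d ∈ walls d s := by
  obtain ⟨v, hv⟩ := Nat.exists_eq_add_of_le' (one_le_runLength (d := d) (s := s) (j := j))
  rw [mem_walls, hv, add_succ_nsmul_sub,
    apply_add_nsmul_of_lt_runLength (s := s) (u := v) (by omega), ← hv]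
  exact apply_add_runLength_nsmul_ne h

theorem update_apply_add_nsmul_of_lt_runLength (hi : i ∈ walls d s) (hji : j ≠ i) (b : Bool)
    (hu : u < runLength d s j) : update s i b (j + u • d) = s j := by
  have hne : j + u • d ≠ i := fun h => hji <| by
    rw [← h, eq_zero_of_add_nsmul_mem_walls hu (h ▸ hi), zero_nsmul, add_zero]
  rw [update_of_ne hne, apply_add_nsmul_of_lt_runLength hu]

theorem runLength_le_runLength_update (hi : i ∈ walls d s) (hji : j ≠ i) (b : Bool) :
    runLength d s j ≤ runLength d (update s i b) j :=
  le_runLength runLength_le fun _ hu => by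
    rw [update_apply_add_nsmul_of_lt_runLength hi hji b hu, update_of_ne hji]

theorem runLength_succ_le_runLength_update (hi : i ∈ walls d s) (hji : j ≠ i)
    (hℓ : runLength d s j < n) (hend : j + runLength d s j • d = i) :
    runLength d s j + 1 ≤ runLength d (update s i (!s i)) j := by
  refine le_runLength hℓ fun u hu => ?_
  rw [update_of_ne hji]
  rcases Nat.lt_succ_iff_lt_or_eq.mp hu with hu | rfl
  · exact update_apply_add_nsmul_of_lt_runLength hi hji _ hu
  · obtain ⟨v, hv⟩ := Nat.exists_eq_add_of_le' (one_le_runLength (d := d) (s := s) (j := j))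
    have hprev : i - d = j + v • d := by rw [← hend, hv, add_succ_nsmul_sub]
    rw [hend, update_self, Bool.eq_not.mpr (mem_walls.mp hi), hprev,
      apply_add_nsmul_of_lt_runLength (s := s) (j := j) (u := v) (by omega), Bool.not_not]

theorem eq_of_le_of_add_nsmul_eq {i' : Fin n} {u' : ℕ} (hi : i ∈ walls d s)
    (hu' : u' < runLength d s i') (hle : u ≤ u') (h : i + u • d = i' + u' • d) : u = u' := by
  obtain ⟨k, rfl⟩ := Nat.exists_eq_add_of_le hle
  have hi' : i = i' + k • d := add_right_cancel (b := u • d) <| by rw [h, add_nsmul]; abel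
  have := eq_zero_of_add_nsmul_mem_walls (s := s) (j := i') (u := k) (by omega) (hi' ▸ hi)
  omega

/-- The runs starting at the walls are disjoint. -/
theorem sum_runLength_walls_le : ∑ i ∈ walls d s, runLength d s i ≤ n := by
  calc ∑ i ∈ walls d s, runLength d s i
      = #((walls d s).sigma fun i => range (runLength d s i)) := by simp [card_sigma]
    _ ≤ #(univ : Finset (Fin n)) := by
      refine card_le_card_of_injOn (fun p => p.1 + p.2 • d) (fun _ _ => mem_univ _) ?_
      rintro ⟨i, u⟩ hp ⟨i', u'⟩ hp' h
      simp only [coe_sigma, Set.mem_sigma_iff, mem_coe, mem_range] at hp hp' h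
      obtain rfl : u = u' := (le_total u u').elim (eq_of_le_of_add_nsmul_eq hp.1 hp'.2 · h)
        fun hle => (eq_of_le_of_add_nsmul_eq hp'.1 hp.2 hle h.symm).symm
      obtain rfl : i = i' := add_right_cancel h
      rfl
    _ = n := by simp

section

variable (hd : addOrderOf d = n)
include hd

theorem exists_lt_add_nsmul_eq (j i : Fin n) : ∃ u < n, j + u • d = i := by
  have hinj : Set.InjOn (fun u => j + u • d) (range n) := fun u hu v hv h =>
    nsmul_injOn_Iio_addOrderOf (by simpa [hd] using hu) (by simpa [hd] using hv)
      (add_left_cancel h)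
  have himage : (range n).image (fun u => j + u • d) = univ :=
    eq_univ_of_card _ (by rw [card_image_of_injOn hinj, card_range, Fintype.card_fin])
  obtain ⟨u, hu, h⟩ := mem_image.mp (himage ▸ mem_univ i)
  exact ⟨u, mem_range.mp hu, h⟩

theorem runLength_lt_of_nonempty (hB : (walls d s).Nonempty) : runLength d s j < n := by
  obtain ⟨b, hb⟩ := hB
  refine runLength_le.lt_of_ne fun hℓ => ?_
  obtain ⟨u, hu, rfl⟩ := exists_lt_add_nsmul_eq hd j b
  obtain rfl := eq_zero_of_add_nsmul_mem_walls (by omega) hb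
  have hpred : (n - 1) • d = -d := eq_neg_of_add_eq_zero_left <| by
    rw [← succ_nsmul, Nat.sub_add_cancel NeZero.one_le]
    exact addOrderOf_dvd_iff_nsmul_eq_zero.mp (by rw [hd])
  refine mem_walls.mp hb ?_
  rw [zero_nsmul, add_zero, sub_eq_add_neg, ← hpred,
    apply_add_nsmul_of_lt_runLength (s := s) (u := n - 1) (by omega)]

theorem add_runLength_nsmul_ne_self (h : runLength d s j < n) : j + runLength d s j • d ≠ j := by
  intro heq
  have h0 : runLength d s j • d = 0 • d := by rw [zero_nsmul]; exact add_eq_left.mp heq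
  have := nsmul_injOn_Iio_addOrderOf (by rw [Set.mem_Iio, hd]; exact h)
    (by rw [Set.mem_Iio, hd]; exact NeZero.pos n) h0
  exact absurd (one_le_runLength (d := d) (s := s) (j := j)) (by omega)

theorem runPotential_add_card_add_one_le (hi : i ∈ walls d s) :
    runPotential d s + #{j | j + runLength d s j • d = i} + 1 ≤
      runPotential d (update s i (!s i)) + runLength d s i := by
  have hgain : ∀ j, runLength d s j + (if j + runLength d s j • d = i then 1 else 0) +
      (if j = i then 1 else 0) ≤
      runLength d (update s i (!s i)) j + (if j = i then runLength d s i else 0) := by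
    intro j
    have hℓ := runLength_lt_of_nonempty hd ⟨i, hi⟩ (j := j)
    by_cases hji : j = i
    · subst hji
      simp [add_runLength_nsmul_ne_self hd hℓ, add_comm, one_le_runLength]
    · by_cases hend : j + runLength d s j • d = i
      · simpa [hji, hend] using runLength_succ_le_runLength_update hi hji hℓ hend
      · simpa [hji, hend] using runLength_le_runLength_update hi hji (!s i)
  have := sum_le_sum fun j (_ : j ∈ univ) => hgain j
  simpa only [sum_add_distrib, sum_boole, sum_ite_eq', filter_eq', mem_univ, if_true,
    card_singleton, Nat.cast_id, runPotential] using this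

theorem card_walls_mul_le_sum_runPotential_update (hB : (walls d s).Nonempty) :
    #(walls d s) * (runPotential d s + 1) ≤
      ∑ i ∈ walls d s, runPotential d (update s i (!s i)) := by
  have hflip := sum_le_sum fun i (hi : i ∈ walls d s) => runPotential_add_card_add_one_le hd hi
  have hends : ∑ i ∈ walls d s, #{j | j + runLength d s j • d = i} = n := by
    rw [← card_eq_sum_card_fiberwise fun j _ =>
      add_runLength_nsmul_mem_walls (runLength_lt_of_nonempty hd hB (j := j))]
    simp
  rw [sum_add_distrib, sum_add_distrib, sum_add_distrib, hends, sum_const, sum_const,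
    smul_eq_mul, smul_eq_mul] at hflip
  have := sum_runLength_walls_le (d := d) (s := s)
  rw [mul_add_one]
  omega

end

variable {G : CircleGame n}

theorem not_currentBR_iff_of_isType3 (h : G.IsType3 i) (s : Fin n → Bool) :
    ¬ G.CurrentBR s i ↔ s i ≠ s (i - 1) := by
  obtain ⟨h₁, h₂, h₃⟩ := h
  cases hi : s i <;> cases hp : s (i - 1) <;> cases hn : s (i + 1) <;>
    simp [CurrentBR, cong, hi, hp, hn] <;> omega

theorem not_currentBR_iff_of_isType3' (h : G.IsType3' i) (s : Fin n → Bool) :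
    ¬ G.CurrentBR s i ↔ s i ≠ s (i + 1) := by
  obtain ⟨h₁, h₂, h₃⟩ := h
  cases hi : s i <;> cases hp : s (i - 1) <;> cases hn : s (i + 1) <;>
    simp [CurrentBR, cong, hi, hp, hn] <;> omega

theorem unsat_eq_walls_of_isType3 (h : ∀ i, G.IsType3 i) (s : Fin n → Bool) :
    G.unsat s = walls 1 s := by
  ext i
  simp [unsat, walls, not_currentBR_iff_of_isType3 (h i)]

theorem unsat_eq_walls_of_isType3' (h : ∀ i, G.IsType3' i) (s : Fin n → Bool) :
    G.unsat s = walls (-1) s := by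
  ext i
  simp [unsat, walls, not_currentBR_iff_of_isType3' (h i)]

theorem unsat_nonempty_iff_not_isNash : (G.unsat s).Nonempty ↔ ¬ G.IsNash s := by
  simp [unsat, IsNash, filter_nonempty_iff]

theorem tsum_stepPMF_mul_of_isNash (h : G.IsNash s) (f : (Fin n → Bool) → ℝ≥0∞) :
    ∑' s', G.stepPMF s s' * f s' = f s := by
  rw [stepPMF, dif_neg (unsat_nonempty_iff_not_isNash.not.mpr (not_not.mpr h)),
    PMF.tsum_pure_mul]

theorem tsum_stepPMF_mul_of_not_isNash (h : ¬ G.IsNash s) (f : (Fin n → Bool) → ℝ≥0∞) :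
    ∑' s', G.stepPMF s s' * f s' =
      (∑ i ∈ G.unsat s, f (update s i (!s i))) / #(G.unsat s) := by
  rw [stepPMF, dif_pos (unsat_nonempty_iff_not_isNash.mpr h), PMF.tsum_bind_mul]
  simp_rw [PMF.tsum_pure_mul]
  exact PMF.tsum_uniformOfFinset_mul _ _ _

variable (hd : addOrderOf d = n) (hG : ∀ s, G.unsat s = walls d s)
include hd hG

theorem runPotential_add_le_tsum_stepPMF_mul (s : Fin n → Bool) :
    (runPotential d s : ℝ≥0∞) + {s | ¬ G.IsNash s}.indicator 1 s ≤
      ∑' s', G.stepPMF s s' * (runPotential d s' : ℝ≥0∞) := by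
  by_cases h : G.IsNash s
  · rw [tsum_stepPMF_mul_of_isNash h]
    simp [h]
  · have hB : (walls d s).Nonempty := hG s ▸ unsat_nonempty_iff_not_isNash.mpr h
    rw [tsum_stepPMF_mul_of_not_isNash h, hG, Set.indicator_of_mem h, Pi.one_apply,
      ENNReal.le_div_iff_mul_le (by simp [hB.ne_empty]) (by simp), mul_comm]
    exact_mod_cast card_walls_mul_le_sum_runPotential_update hd hB

theorem expTime_le_sq (s : Fin n → Bool) : G.expTime s ≤ (n : ℝ≥0∞) ^ 2 := by
  have := PMF.tsum_tsum_mul_le_of_drift (G.walk s) G.stepPMF (fun s' => runPotential d s')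
    ({s' | ¬ G.IsNash s'}.indicator 1) (fun _ => rfl) (runPotential_add_le_tsum_stepPMF_mul hd hG)
    ((n : ℝ≥0∞) ^ 2) fun s' => by exact_mod_cast runPotential_le
  refine le_of_eq_of_le (tsum_congr fun t => ?_) this
  rw [tsum_fintype, sum_filter]
  exact sum_congr rfl fun s' _ => by by_cases h : G.IsNash s' <;> simp [h]

end CircleGame

/-- There is a constant `C > 0` such that for every circle game with `n`
players in which all players are of type 3 (or all are of type 3') and every initial
state, the expected number of steps until the random best response dynamics reaches a
Nash equilibrium is at most `C·n^2`. -/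
theorem circle_type3_random_dynamics_upper_bound :
    ∃ C : ℕ, 0 < C ∧
      ∀ (n : ℕ) [NeZero n] (G : CircleGame n),
        ((∀ i, G.IsType3 i) ∨ (∀ i, G.IsType3' i)) →
        ∀ s : Fin n → Bool,
          G.expTime s ≤ (C : ℝ≥0∞) * (n : ℝ≥0∞) ^ 2 := by
  refine ⟨1, one_pos, fun n _ G hG s => ?_⟩
  rw [Nat.cast_one, one_mul]
  rcases hG with h3 | h3'
  · exact CircleGame.expTime_le_sq (Fin.addOrderOf_one n)
      (CircleGame.unsat_eq_walls_of_isType3 h3) s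
  · exact CircleGame.expTime_le_sq (by rw [addOrderOf_neg, Fin.addOrderOf_one])
      (CircleGame.unsat_eq_walls_of_isType3' h3') s
end

section
/- Let S* be a Nash equilibrium of the game Γ_n. Then for every gadget index 0 ≤ i < n, every j ∈ {1,3} and every b ∈ {0,1}, the number of type-j players of gadget G_i playing their b-strategy equals the number of type-(j−1) players of gadget G_i playing their b-strategy: c^b_{i,j}(S*) = c^b_{i,j−1}(S*). -/
/-- A state of the game `Γ_n`: `s i j k` is the strategy played by the `k`-th type-`j`
player of gadget `G_i` (`false` = 0-strategy, `true` = 1-strategy). -/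
abbrev GState (n : ℕ) := Fin n → Fin 5 → Fin n → Bool

/-- `cb s b i j` = the number `c^b_{i,j}(s)` of type-`j` players of gadget `G_i`
playing their `b`-strategy in state `s`. -/
def cb {n : ℕ} (s : GState n) (b : Bool) (i : Fin n) (j : Fin 5) : ℕ :=
  (Finset.univ.filter fun k => s i j k = b).card

/-- Congestion `n_{i,0}(s)` of resource `r_{i,0}` (which coincides with `r_{i-1,3}`):
it is allocated by the type-0, type-2 and type-4 players of `G_i` playing their
0-strategy and the type-1, type-3 and type-4 players of `G_{i-1}` playing their
1-strategy. -/
def congR0 {n : ℕ} [NeZero n] (s : GState n) (i : Fin n) : ℕ :=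
  cb s false i 0 + cb s false i 2 + cb s false i 4 +
    cb s true (i - 1) 1 + cb s true (i - 1) 3 + cb s true (i - 1) 4

/-- Congestion `n_{i,1}(s)` of resource `r_{i,1}`. -/
def congR1 {n : ℕ} (s : GState n) (i : Fin n) : ℕ := cb s true i 0 + cb s false i 1

/-- Congestion `n_{i,2}(s)` of resource `r_{i,2}`. -/
def congR2 {n : ℕ} (s : GState n) (i : Fin n) : ℕ := cb s true i 2 + cb s false i 3

/-- The thresholds `t_0 = 3n`, `t_1 = n-1`, `t_2 = 3n-2`, `t_3 = n-1`, `t_4 = 3n-1`. -/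
def threshold (n : ℕ) : Fin 5 → ℕ := ![3 * n, n - 1, 3 * n - 2, n - 1, 3 * n - 1]

/-- The congestion of the 0-strategy resource of a type-`j` player of gadget `G_i`
(`r_{i,0}` for types 0, 2, 4; `r_{i,1}` for type 1; `r_{i,2}` for type 3). -/
def res0cong {n : ℕ} [NeZero n] (s : GState n) (i : Fin n) : Fin 5 → ℕ :=
  ![congR0 s i, congR1 s i, congR0 s i, congR2 s i, congR0 s i]

/-- `s` is a Nash equilibrium of `Γ_n`: every player plays its best response, where the
0-strategy of a type-`j` player is its (unique) best response iff the number of *other*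
players allocating its 0-strategy resource is at most `threshold n j`, and otherwise its
1-strategy is its best response. -/
def IsNashG {n : ℕ} [NeZero n] (s : GState n) : Prop :=
  ∀ (i : Fin n) (j : Fin 5) (k : Fin n),
    (s i j k = false → res0cong s i j - 1 ≤ threshold n j) ∧
    (s i j k = true → threshold n j < res0cong s i j)


lemma cb_total {n : ℕ} (s : GState n) (i : Fin n) (j : Fin 5) :
    cb s false i j + cb s true i j = n := by
  have h := Finset.card_filter_add_card_filter_not
    (s := (Finset.univ : Finset (Fin n))) (p := fun k => s i j k = false)
  simpa [cb, Bool.not_eq_false] using h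

lemma cb_le {n : ℕ} (s : GState n) (b : Bool) (i : Fin n) (j : Fin 5) :
    cb s b i j ≤ n := by
  simpa [cb] using (Finset.card_filter_le (Finset.univ : Finset (Fin n))
    (fun k => s i j k = b)).trans_eq (Finset.card_fin n)

lemma exists_of_cb_pos {n : ℕ} {s : GState n} {b : Bool} {i : Fin n} {j : Fin 5}
    (h : 0 < cb s b i j) : ∃ k, s i j k = b := by
  obtain ⟨k, hk⟩ := Finset.card_pos.mp h
  exact ⟨k, (Finset.mem_filter.mp hk).2⟩

lemma congR1_eq {n : ℕ} [NeZero n] (s : GState n) (hnash : IsNashG s) (i : Fin n) :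
    congR1 s i = n := by
  have hn : 1 ≤ n := Nat.one_le_iff_ne_zero.mpr (NeZero.ne n)
  have htot := cb_total s i 1
  have h0 := cb_le s true i 0
  have h1 := cb_le s false i 1
  have hle : congR1 s i ≤ n := by
    rcases Nat.eq_zero_or_pos (cb s false i 1) with h | h
    · unfold congR1; omega
    · obtain ⟨k, hk⟩ := exists_of_cb_pos h
      have := (hnash i 1 k).1 hk
      simp [res0cong, threshold] at this
      omega
  have hge : n ≤ congR1 s i := by
    rcases Nat.eq_zero_or_pos (cb s true i 1) with h | h
    · unfold congR1; omega
    · obtain ⟨k, hk⟩ := exists_of_cb_pos h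
      have := (hnash i 1 k).2 hk
      simp [res0cong, threshold] at this
      omega
  omega

lemma congR2_eq {n : ℕ} [NeZero n] (s : GState n) (hnash : IsNashG s) (i : Fin n) :
    congR2 s i = n := by
  have hn : 1 ≤ n := Nat.one_le_iff_ne_zero.mpr (NeZero.ne n)
  have htot := cb_total s i 3
  have h0 := cb_le s true i 2
  have h1 := cb_le s false i 3
  have hle : congR2 s i ≤ n := by
    rcases Nat.eq_zero_or_pos (cb s false i 3) with h | h
    · unfold congR2; omega
    · obtain ⟨k, hk⟩ := exists_of_cb_pos h
      have := (hnash i 3 k).1 hk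
      simp [res0cong, threshold] at this
      omega
  have hge : n ≤ congR2 s i := by
    rcases Nat.eq_zero_or_pos (cb s true i 3) with h | h
    · unfold congR2; omega
    · obtain ⟨k, hk⟩ := exists_of_cb_pos h
      have := (hnash i 3 k).2 hk
      simp [res0cong, threshold] at this
      omega
  omega

/-- In every Nash equilibrium of `Γ_n`, for every gadget index `i`, every
`j ∈ {1,3}` and every `b ∈ {0,1}`, the number of type-`j` players of gadget `G_i`
playing their `b`-strategy equals the number of type-`(j-1)` players of `G_i` playing
their `b`-strategy. -/
theorem gadget_nash_counts_determined
    (n : ℕ) [NeZero n] (hn : 2 ≤ n) (heven : Even n)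
    (s : GState n) (hnash : IsNashG s) :
    ∀ (i : Fin n) (b : Bool), cb s b i 1 = cb s b i 0 ∧ cb s b i 3 = cb s b i 2 := by
  intro i b
  have h1 := congR1_eq s hnash i
  have h2 := congR2_eq s hnash i
  unfold congR1 at h1
  unfold congR2 at h2
  have t0 := cb_total s i 0
  have t1 := cb_total s i 1
  have t2 := cb_total s i 2
  have t3 := cb_total s i 3
  cases b <;> constructor <;> omega
end

section
/- For every Nash equilibrium S* of the game Γ_n and every gadget index 0 ≤ i < n: if c^0_{i,0}(S*) < n then c^0_{i,4}(S*) = 0, and if c^0_{i,4}(S*) < n then c^0_{i,2}(S*) = 0. -/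

lemma exists_true_of_cb_lt {n : ℕ} (s : GState n) (i : Fin n) (j : Fin 5)
    (h : cb s false i j < n) : ∃ k, s i j k = true := by
  by_contra h'
  push_neg at h'
  have hall : ∀ k, s i j k = false := fun k => by
    cases hk : s i j k
    · rfl
    · exact absurd hk (h' k)
  have : cb s false i j = n := by
    unfold cb
    rw [Finset.filter_true_of_mem (fun k _ => hall k)]
    simp
  omega

lemma exists_false_of_cb_pos {n : ℕ} (s : GState n) (i : Fin n) (j : Fin 5)
    (h : 0 < cb s false i j) : ∃ k, s i j k = false := by
  unfold cb at h
  rw [Finset.card_pos] at h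
  obtain ⟨k, hk⟩ := h
  exact ⟨k, (Finset.mem_filter.mp hk).2⟩

/-- For every Nash equilibrium of `Γ_n` and every gadget index `i`:
if `c^0_{i,0} < n` then `c^0_{i,4} = 0`, and if `c^0_{i,4} < n` then `c^0_{i,2} = 0`. -/
theorem gadget_nash_threshold_implications
    (n : ℕ) [NeZero n] (hn : 2 ≤ n) (heven : Even n)
    (s : GState n) (hnash : IsNashG s) :
    ∀ i : Fin n, (cb s false i 0 < n → cb s false i 4 = 0) ∧
      (cb s false i 4 < n → cb s false i 2 = 0) := by
  intro i
  constructor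
  · intro h0
    by_contra h4
    have hpos : 0 < cb s false i 4 := Nat.pos_of_ne_zero h4
    obtain ⟨k0, hk0⟩ := exists_true_of_cb_lt s i 0 h0
    obtain ⟨k4, hk4⟩ := exists_false_of_cb_pos s i 4 hpos
    have h1 := (hnash i 0 k0).2 hk0
    have h2 := (hnash i 4 k4).1 hk4
    simp [res0cong, threshold] at h1 h2
    omega
  · intro h4
    by_contra h2
    have hpos : 0 < cb s false i 2 := Nat.pos_of_ne_zero h2
    obtain ⟨k4, hk4⟩ := exists_true_of_cb_lt s i 4 h4
    obtain ⟨k2, hk2⟩ := exists_false_of_cb_pos s i 2 hpos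
    have h1 := (hnash i 4 k4).2 hk4
    have h2' := (hnash i 2 k2).1 hk2
    simp [res0cong, threshold] at h1 h2'
    omega
end
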